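/- Let y, h_1, …, h_T be jointly distributed discrete random variables on a common probability space, where y takes values in a finite set 𝒴 and each h_j takes values in a finite set. Define the Bayes error p_e = ∑_z P((h_1,…,h_T) = z) · ( 1 − max_{i ∈ 𝒴} P(y = i | (h_1,…,h_T) = z) ), the sum ranging over z with P((h_1,…,h_T)=z) > 0. Then p_e ≤ (1/2) · [ H(y) − ∑_{j=1}^{T} I(y; h_j | h_1, …, h_{j−1}) ], where for j = 1 the conditional mutual information I(y; h_1 | ∅) is understood as I(y; h_1); equivalently, p_e ≤ (1/2) · H(y | (h_1, …, h_T)). -/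

import Mathlib

/-!  Self-contained finite-probability setup.

A finite probability space is given by a mass function `μ : Ω → ℝ` on a `Fintype Ω`
with `∀ ω, 0 ≤ μ ω` and `∑ ω, μ ω = 1`.  All logarithms are base 2; the conventions
`0 · log₂ 0 = 0` and `x / 0 = 0` agree with Lean's `Real.logb 2 0 = 0` and division. -/

-- Probability of the event `{ω | p ω}` under the mass function `μ`.
open Classical in
noncomputable def pr {Ω : Type*} [Fintype Ω] (μ : Ω → ℝ) (p : Ω → Prop) : ℝ :=
  ∑ ω, if p ω then μ ω else 0

/-- Shannon entropy (base 2) of the discrete random variable `X`. -/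
noncomputable def entropy {Ω α : Type*} [Fintype Ω] [Fintype α]
    (μ : Ω → ℝ) (X : Ω → α) : ℝ :=
  -∑ a, pr μ (fun ω => X ω = a) * Real.logb 2 (pr μ (fun ω => X ω = a))

/-- Conditional entropy `H(X | Y) = ∑_b P(Y = b) · H(X | Y = b)`, where the conditional
distribution is `P(X = a | Y = b) = P(X = a ∧ Y = b) / P(Y = b)`. -/
noncomputable def condEntropy {Ω α β : Type*} [Fintype Ω] [Fintype α] [Fintype β]
    (μ : Ω → ℝ) (X : Ω → α) (Y : Ω → β) : ℝ :=
  ∑ b, pr μ (fun ω => Y ω = b) *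
    (-∑ a,
      (pr μ (fun ω => X ω = a ∧ Y ω = b) / pr μ (fun ω => Y ω = b)) *
        Real.logb 2 (pr μ (fun ω => X ω = a ∧ Y ω = b) / pr μ (fun ω => Y ω = b)))

/-- Mutual information `I(X ; Y) = H(X) − H(X | Y)`. -/
noncomputable def mutualInfo {Ω α β : Type*} [Fintype Ω] [Fintype α] [Fintype β]
    (μ : Ω → ℝ) (X : Ω → α) (Y : Ω → β) : ℝ :=
  entropy μ X - condEntropy μ X Y

/-- Conditional mutual information `I(X ; Y | Z) = H(X | Z) − H(X | (Y, Z))`. -/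
noncomputable def condMutualInfo {Ω α β γ : Type*}
    [Fintype Ω] [Fintype α] [Fintype β] [Fintype γ]
    (μ : Ω → ℝ) (X : Ω → α) (Y : Ω → β) (Z : Ω → γ) : ℝ :=
  condEntropy μ X Z - condEntropy μ X (fun ω => (Y ω, Z ω))

/-- Binary entropy function `H_b(p) = −p log₂ p − (1 − p) log₂ (1 − p)`. -/
noncomputable def binEntropy (p : ℝ) : ℝ :=
  -(p * Real.logb 2 p) - (1 - p) * Real.logb 2 (1 - p)

/-! Conditioning on the whole tuple, the chain rule telescopes `H(y) - ∑ⱼ I(y; hⱼ | h₍<ⱼ₎)`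
to `H(y | h₁, …, h_T)`, so it suffices to bound, for each value of the tuple, the error
`1 - max q` of the posterior `q` by half its entropy in bits. With `p = max q`: if `p ≥ 1/2`,
the atoms other than the mode all have mass at most `1 - p`, so `H(q) ≥ H_b(p)`, and the concave
binary entropy lies above its chord `2 (1 - p)` on `[1/2, 1]`; if `p < 1/2`, then
`H(q) ≥ -log₂ p ≥ 2 (1 - p)`. -/

open Finset

namespace Real

lemma mul_neg_log_le_negMulLog {t c : ℝ} (ht : 0 ≤ t) (htc : t ≤ c) :
    t * -log c ≤ negMulLog t := by
  rcases ht.eq_or_lt with rfl | ht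
  · simp
  · rw [negMulLog, neg_mul, ← mul_neg]
    exact mul_le_mul_of_nonneg_left (neg_le_neg (log_le_log ht htc)) ht.le

lemma sum_mul_neg_log_le_sum_negMulLog {ι : Type*} {s : Finset ι} {q : ι → ℝ} {c : ℝ}
    (hq : ∀ i ∈ s, 0 ≤ q i ∧ q i ≤ c) :
    (∑ i ∈ s, q i) * -log c ≤ ∑ i ∈ s, negMulLog (q i) := by
  rw [sum_mul]
  exact sum_le_sum fun i hi => mul_neg_log_le_negMulLog (hq i hi).1 (hq i hi).2

lemma two_mul_one_sub_mul_log_two_le_binEntropy {p : ℝ} (hp : 2⁻¹ ≤ p) (hp1 : p ≤ 1) :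
    2 * (1 - p) * log 2 ≤ Real.binEntropy p := by
  have hchord := strictConcave_binEntropy.concaveOn.2
    (show (2⁻¹ : ℝ) ∈ Set.Icc 0 1 by norm_num) (show (1 : ℝ) ∈ Set.Icc 0 1 by norm_num)
    (show 0 ≤ 2 - 2 * p by linarith) (show 0 ≤ 2 * p - 1 by linarith) (by ring)
  have hp_eq : (2 - 2 * p) • (2⁻¹ : ℝ) + (2 * p - 1) • (1 : ℝ) = p := by
    simp only [smul_eq_mul]; ring
  rw [hp_eq] at hchord
  simp only [binEntropy_two_inv, binEntropy_one, smul_eq_mul] at hchord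
  linarith

lemma two_mul_one_sub_mul_log_two_le_neg_log {p : ℝ} (hp0 : 0 < p) (hp : p ≤ 2⁻¹) :
    2 * (1 - p) * log 2 ≤ -log p := by
  have hlog2 : log 2 ≤ 1 := by linarith [log_le_sub_one_of_pos (x := 2) (by norm_num)]
  have h2p : log (2 * p) ≤ 2 * p - 1 := log_le_sub_one_of_pos (by linarith)
  rw [log_mul two_ne_zero hp0.ne'] at h2p
  nlinarith

lemma two_mul_one_sub_sup'_mul_log_two_le_sum_negMulLog {ι : Type*} [Fintype ι] [Nonempty ι]
    {q : ι → ℝ} (hq0 : ∀ i, 0 ≤ q i) (hq1 : ∑ i, q i = 1) :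
    2 * (1 - univ.sup' univ_nonempty q) * log 2 ≤ ∑ i, negMulLog (q i) := by
  classical
  obtain ⟨i₀, -, hi₀⟩ := exists_mem_eq_sup' univ_nonempty q
  set p := univ.sup' univ_nonempty q
  have hle : ∀ i, q i ≤ p := fun i => le_sup' q (mem_univ i)
  have hrest : ∑ i ∈ univ.erase i₀, q i = 1 - p := by
    rw [hi₀, ← hq1, ← add_sum_erase univ q (mem_univ i₀), add_sub_cancel_left]
  by_cases hp : 2⁻¹ ≤ p
  · have hrest_le : negMulLog (1 - p) ≤ ∑ i ∈ univ.erase i₀, negMulLog (q i) := by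
      have := sum_mul_neg_log_le_sum_negMulLog (s := univ.erase i₀) (q := q) (c := 1 - p)
        fun i hi => ⟨hq0 i, hrest ▸ single_le_sum (fun j _ => hq0 j) hi⟩
      rwa [hrest, ← neg_mul_comm, ← negMulLog] at this
    have hp1 : p ≤ 1 := hi₀ ▸ hq1 ▸ single_le_sum (fun i _ => hq0 i) (mem_univ i₀)
    rw [← add_sum_erase univ _ (mem_univ i₀), ← hi₀]
    have := two_mul_one_sub_mul_log_two_le_binEntropy hp hp1
    rw [binEntropy_eq_negMulLog_add_negMulLog_one_sub] at this
    linarith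
  · push Not at hp
    have hp0 : 0 < p := by
      by_contra! hp0
      linarith [sum_nonpos fun i (_ : i ∈ univ) => (hle i).trans hp0]
    have := sum_mul_neg_log_le_sum_negMulLog (s := univ) (q := q) fun i _ => ⟨hq0 i, hle i⟩
    rw [hq1, one_mul] at this
    linarith [two_mul_one_sub_mul_log_two_le_neg_log hp0 hp.le]

end Real

section FiniteProbability

variable {Ω α : Type*} [Fintype Ω] [Fintype α] {μ : Ω → ℝ}

lemma pr_nonneg (hμ0 : ∀ ω, 0 ≤ μ ω) (p : Ω → Prop) : 0 ≤ pr μ p :=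
  sum_nonneg fun ω _ => by split_ifs <;> simp [hμ0 ω]

lemma sum_pr_eq_and (X : Ω → α) (p : Ω → Prop) :
    ∑ a, pr μ (fun ω => X ω = a ∧ p ω) = pr μ p := by
  classical
  unfold pr
  rw [sum_comm]
  refine sum_congr rfl fun ω _ => ?_
  by_cases hp : p ω <;> simp [hp]

lemma sum_pr_eq_and_div_pr_eq {γ : Type*} (X : Ω → α) (Y : Ω → γ) {z : γ}
    (hz : pr μ (fun ω => Y ω = z) ≠ 0) :
    ∑ a, pr μ (fun ω => X ω = a ∧ Y ω = z) / pr μ (fun ω => Y ω = z) = 1 := by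
  rw [← sum_div, sum_pr_eq_and, div_self hz]

lemma condEntropy_comp_equiv {β γ : Type*} [Fintype β] [Fintype γ]
    (X : Ω → α) (Y : Ω → β) (e : β ≃ γ) :
    condEntropy μ X (fun ω => e (Y ω)) = condEntropy μ X Y := by
  unfold condEntropy
  rw [← e.sum_comp]
  simp only [EmbeddingLike.apply_eq_iff_eq]

lemma condEntropy_of_unique {γ : Type*} [Fintype γ] [Unique γ] (hμ1 : ∑ ω, μ ω = 1)
    (X : Ω → α) (Y : Ω → γ) :
    condEntropy μ X Y = entropy μ X := by
  have hY : ∀ ω, (Y ω = default) = True := fun ω => eq_true (Subsingleton.elim _ _)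
  have hpr : pr μ (fun _ => True) = 1 := by simpa [pr] using hμ1
  simp only [condEntropy, entropy, Fintype.sum_unique, hY, and_true, hpr, one_mul, div_one]

end FiniteProbability

lemma one_sub_sup'_le_half_mul_neg_sum_mul_logb {ι : Type*} [Fintype ι] [Nonempty ι]
    {q : ι → ℝ} (hq0 : ∀ i, 0 ≤ q i) (hq1 : ∑ i, q i = 1) :
    1 - univ.sup' univ_nonempty q ≤ 1 / 2 * -∑ i, q i * Real.logb 2 (q i) := by
  have hlog2 : 0 < Real.log 2 := Real.log_pos one_lt_two
  have hbits : -∑ i, q i * Real.logb 2 (q i) = (∑ i, Real.negMulLog (q i)) / Real.log 2 := by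
    rw [sum_div, ← sum_neg_distrib]
    refine sum_congr rfl fun i _ => ?_
    rw [Real.logb, Real.negMulLog]
    ring
  rw [hbits, ← mul_div_assoc, le_div_iff₀ hlog2]
  linarith [Real.two_mul_one_sub_sup'_mul_log_two_le_sum_negMulLog hq0 hq1]

section BayesError

variable {Ω α γ : Type*} [Fintype Ω] [Fintype α] [Nonempty α] [Fintype γ]

open Classical in
noncomputable def bayesError (μ : Ω → ℝ) (X : Ω → α) (Y : Ω → γ) : ℝ :=
  ∑ z ∈ univ.filter (fun z => 0 < pr μ (fun ω => Y ω = z)),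
    pr μ (fun ω => Y ω = z) *
      (1 - univ.sup' univ_nonempty (fun i =>
        pr μ (fun ω => X ω = i ∧ Y ω = z) / pr μ (fun ω => Y ω = z)))

theorem bayesError_le_half_mul_condEntropy {μ : Ω → ℝ} (hμ0 : ∀ ω, 0 ≤ μ ω)
    (X : Ω → α) (Y : Ω → γ) :
    bayesError μ X Y ≤ 1 / 2 * condEntropy μ X Y := by
  unfold bayesError condEntropy
  rw [mul_sum]
  refine (sum_le_sum fun z hz => ?_).trans_eq (sum_filter_of_ne fun z _ hne => ?_)
  · have hz : 0 < pr μ (fun ω => Y ω = z) := (mem_filter.1 hz).2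
    have hfano := one_sub_sup'_le_half_mul_neg_sum_mul_logb
      (fun a => div_nonneg (pr_nonneg hμ0 (fun ω => X ω = a ∧ Y ω = z)) hz.le)
      (sum_pr_eq_and_div_pr_eq X Y hz.ne')
    rw [mul_left_comm]
    exact mul_le_mul_of_nonneg_left hfano hz.le
  · refine (pr_nonneg hμ0 _).lt_of_ne fun h0 => hne ?_
    rw [← h0, zero_mul, mul_zero]

end BayesError

section ChainRule

variable {Ω α : Type*} [Fintype Ω] [Fintype α] {T : ℕ} {β : Fin T → Type*} [∀ j, Fintype (β j)]

def initTuple (h : ∀ j, Ω → β j) (n : ℕ) (hn : n ≤ T) : Ω → ∀ i : Fin n, β (Fin.castLE hn i) :=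
  fun ω i => h (Fin.castLE hn i) ω

lemma condMutualInfo_initTuple (μ : Ω → ℝ) (X : Ω → α) (h : ∀ j, Ω → β j) (j : Fin T) :
    condMutualInfo μ X (h j) (initTuple h j j.isLt.le)
      = condEntropy μ X (initTuple h j j.isLt.le)
        - condEntropy μ X (initTuple h (j + 1) j.isLt) := by
  unfold condMutualInfo
  congr 1
  rw [← condEntropy_comp_equiv X _ (Fin.snocEquiv fun i : Fin (j + 1) => β (Fin.castLE j.isLt i))]
  congr 1
  funext ω i
  refine Fin.lastCases ?_ (fun k => ?_) i
  · exact Fin.snoc_last (α := fun i : Fin (j + 1) => β (Fin.castLE j.isLt i)) _ _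
  · exact Fin.snoc_castSucc (α := fun i : Fin (j + 1) => β (Fin.castLE j.isLt i)) _ _ _

theorem entropy_sub_sum_condMutualInfo_initTuple {μ : Ω → ℝ} (hμ1 : ∑ ω, μ ω = 1)
    (X : Ω → α) (h : ∀ j, Ω → β j) :
    entropy μ X - ∑ j : Fin T, condMutualInfo μ X (h j) (initTuple h j j.isLt.le)
      = condEntropy μ X (fun ω j => h j ω) := by
  let G : ℕ → ℝ := fun n => if hn : n ≤ T then condEntropy μ X (initTuple h n hn) else 0
  have hG0 : G 0 = entropy μ X := by
    simp only [G, dif_pos (Nat.zero_le T)]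
    exact condEntropy_of_unique hμ1 X _
  have hGT : G T = condEntropy μ X (fun ω j => h j ω) := dif_pos le_rfl
  have hstep (j : Fin T) :
      condMutualInfo μ X (h j) (initTuple h j j.isLt.le) = G j - G (j + 1) := by
    simp only [G, dif_pos j.isLt.le, dif_pos (Nat.succ_le_of_lt j.isLt), condMutualInfo_initTuple]
  rw [sum_congr rfl fun j _ => hstep j, Fin.sum_univ_eq_sum_range (fun n => G n - G (n + 1)),
    sum_range_sub', hG0, hGT, sub_sub_cancel]

end ChainRule

open Classical in
theorem bayes_error_le_half_entropy_sub_chain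
    {Ω 𝒴 : Type*} [Fintype Ω] [Fintype 𝒴] [Nonempty 𝒴]
    (μ : Ω → ℝ) (hμ0 : ∀ ω, 0 ≤ μ ω) (hμ1 : ∑ ω, μ ω = 1)
    (T : ℕ) (β : Fin T → Type*) [∀ j, Fintype (β j)]
    (h : ∀ j : Fin T, Ω → β j)
    (y : Ω → 𝒴) :
    ∑ z ∈ Finset.univ.filter
        (fun z : ∀ j : Fin T, β j => 0 < pr μ (fun ω => (fun j => h j ω) = z)),
        pr μ (fun ω => (fun j => h j ω) = z) *
          (1 - Finset.univ.sup' Finset.univ_nonempty (fun i : 𝒴 =>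
            pr μ (fun ω => y ω = i ∧ (fun j => h j ω) = z) /
              pr μ (fun ω => (fun j => h j ω) = z))) ≤
      (1 / 2) *
        (entropy μ y
          - ∑ j : Fin T, condMutualInfo μ y (h j)
              (fun ω => fun i : Fin j.val => h (Fin.castLE j.isLt.le i) ω)) := by
  have hfano := bayesError_le_half_mul_condEntropy hμ0 y (fun ω j => h j ω)
  rw [← entropy_sub_sum_condMutualInfo_initTuple hμ1 y h] at hfano
  exact hfano
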